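/- arXiv:2211.06776 — 4 statements merged into one kernel-verified Lean document; each statement's English description precedes it below -/
import Mathlib

section
/- Let V = ⊕_{p,q} V^{p,q} be a bigraded vector space with a degree (2,0) operator L such that L^j : V^{n-j,q} → V^{n+j,q} is an isomorphism for all j, q. Then every v ∈ V^{p,q} admits a unique primitive decomposition v = Σ_{j ≥ max(p-n, 0)} L^j v_j where v_j ∈ V^{p-2j,q} satisfies L^{n-(p-2j)+1} v_j = 0. -/
/-- primitive decomposition with respect to a bidegree (2,0)
operator `L` on a finite-dimensional bigraded complex vector space satisfying
hard Lefschetz in the first grading.  Every `v ∈ V^{p,q}` admits a unique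
decomposition `v = Σ_{j ≥ max(p-n,0)} L^j v_j` with `v_j ∈ V^{p-2j,q}`
primitive, i.e. `L^{n-(p-2j)+1} v_j = 0`. -/
theorem stmt5 {W : Type*} [AddCommGroup W] [Module ℂ W] [FiniteDimensional ℂ W]
    (V : ℤ → ℤ → Submodule ℂ W)
    (hV : DirectSum.IsInternal fun pq : ℤ × ℤ => V pq.1 pq.2)
    (n : ℤ) (L : Module.End ℂ W)
    (hL : ∀ p q : ℤ, ∀ v ∈ V p q, L v ∈ V (p + 2) q)
    (hsurj : ∀ j : ℕ, ∀ q : ℤ, ∀ w ∈ V (n + j) q, ∃ v ∈ V (n - j) q, (L ^ j) v = w)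
    (hinj : ∀ j : ℕ, ∀ q : ℤ, ∀ v ∈ V (n - j) q, (L ^ j) v = 0 → v = 0) :
    ∀ p q : ℤ, ∀ v ∈ V p q,
      ∃! c : ℕ →₀ W,
        (∀ j : ℕ, c j ∈ V (p - 2 * j) q) ∧
        (∀ j : ℕ, (j : ℤ) < max (p - n) 0 → c j = 0) ∧
        (∀ j : ℕ, (L ^ (n - (p - 2 * j) + 1).toNat) (c j) = 0) ∧
        v = c.sum fun j w => (L ^ j) w := by
  classical
  -- iterating L
  have hLpow : ∀ (k : ℕ) (p q : ℤ), ∀ v ∈ V p q, (L ^ k) v ∈ V (p + 2 * k) q := by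
    intro k
    induction k with
    | zero => intro p q v hv; simpa using hv
    | succ k ihk =>
      intro p q v hv
      have h1 := hL (p + 2 * k) q _ (ihk p q v hv)
      have h2 : (L ^ (k + 1)) v = L ((L ^ k) v) := by
        rw [pow_succ', Module.End.mul_apply]
      rw [h2]
      have h3 : p + 2 * ((k : ℤ) + 1) = p + 2 * k + 2 := by ring
      push_cast
      rw [h3]
      exact h1
  -- finiteness: a lower bound B below which all pieces vanish
  have hind := hV.submodule_iSupIndep
  haveI := hind.fintypeNeBotOfFiniteDimensional
  have hfin : {pq : ℤ × ℤ | V pq.1 pq.2 ≠ ⊥}.Finite := by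
    have hFin : Finite {pq : ℤ × ℤ // V pq.1 pq.2 ≠ ⊥} := Finite.of_fintype _
    exact Set.finite_coe_iff.mp hFin
  obtain ⟨B, hB⟩ := (hfin.image Prod.fst).bddBelow
  have hbot : ∀ p q : ℤ, p < B → V p q = ⊥ := by
    intro p q hp
    by_contra h
    have : p ∈ Prod.fst '' {pq : ℤ × ℤ | V pq.1 pq.2 ≠ ⊥} :=
      ⟨(p, q), h, rfl⟩
    exact absurd (hB this) (by omega)
  -- key uniqueness lemma
  have key0 : ∀ p q : ℤ, ∀ c : ℕ →₀ W,
      (∀ j : ℕ, c j ∈ V (p - 2 * j) q) →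
      (∀ j : ℕ, (j : ℤ) < max (p - n) 0 → c j = 0) →
      (∀ j : ℕ, (L ^ (n - (p - 2 * j) + 1).toNat) (c j) = 0) →
      (c.sum fun j w => (L ^ j) w) = 0 → c = 0 := by
    intro p q c hmem hlow hprim hsum
    by_contra hc
    have hne : c.support.Nonempty := Finsupp.support_nonempty_iff.mpr hc
    set k := c.support.max' hne with hk
    have hkmem : k ∈ c.support := Finset.max'_mem _ _
    have hck : c k ≠ 0 := Finsupp.mem_support_iff.mp hkmem
    have hklow : max (p - n) 0 ≤ (k : ℤ) := le_of_not_gt fun h => hck (hlow k h)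
    have hk1 : p - n ≤ (k : ℤ) := le_trans (le_max_left _ _) hklow
    set M := (n - p + k).toNat with hM
    have hMz : (M : ℤ) = n - p + k := Int.toNat_of_nonneg (by omega)
    have h2 : (c.sum fun j w => (L ^ (M + j)) w) = 0 := by
      have h := congrArg (L ^ M) hsum
      rw [map_finsuppSum, map_zero] at h
      rw [← h]
      apply Finsupp.sum_congr
      intro j _
      rw [pow_add, Module.End.mul_apply]
    have h3 : (L ^ (M + k)) (c k) = 0 := by
      rw [Finsupp.sum, Finset.sum_eq_single_of_mem k hkmem] at h2
      · exact h2
      · intro j hj hjk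
        have hjlt : j < k := lt_of_le_of_ne (Finset.le_max' _ _ hj) hjk
        have hjlow : max (p - n) 0 ≤ (j : ℤ) :=
          le_of_not_gt fun h => (Finsupp.mem_support_iff.mp hj) (hlow j h)
        have hj1 : p - n ≤ (j : ℤ) := le_trans (le_max_left _ _) hjlow
        set e := (n - (p - 2 * (j : ℤ)) + 1).toNat with he
        have hez : (e : ℤ) = n - (p - 2 * j) + 1 := Int.toNat_of_nonneg (by omega)
        have hle : e ≤ M + j := by omega
        have hsplit : M + j = (M + j - e) + e := by omega
        rw [hsplit, pow_add, Module.End.mul_apply, hprim j, map_zero]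
    have hmemk : c k ∈ V (n - (M + k : ℕ) : ℤ) q := by
      have : (n - ((M + k : ℕ) : ℤ)) = p - 2 * k := by push_cast; omega
      rw [this]; exact hmem k
    exact hck (hinj (M + k) q (c k) hmemk h3)
  -- existence by strong induction
  have exist : ∀ m : ℕ, ∀ p q : ℤ, p < B + m → ∀ v ∈ V p q,
      ∃ c : ℕ →₀ W,
        (∀ j : ℕ, c j ∈ V (p - 2 * j) q) ∧
        (∀ j : ℕ, (j : ℤ) < max (p - n) 0 → c j = 0) ∧
        (∀ j : ℕ, (L ^ (n - (p - 2 * j) + 1).toNat) (c j) = 0) ∧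
        v = c.sum fun j w => (L ^ j) w := by
    intro m
    induction m using Nat.strong_induction_on with
    | _ m ih =>
    intro p q hpm v hv
    by_cases hpB : p < B
    · refine ⟨0, ?_, ?_, ?_, ?_⟩
      · intro j; simp
      · intro j _; simp
      · intro j; simp
      · rw [hbot p q hpB, Submodule.mem_bot] at hv
        rw [hv, Finsupp.sum_zero_index]
    · have hm : 1 ≤ m := by omega
      by_cases hpn : p ≤ n
      · -- primitive extraction
        set e := (n - p + 1).toNat with he
        have hez : (e : ℤ) = n - p + 1 := Int.toNat_of_nonneg (by omega)
        have hv2 : (L ^ e) v ∈ V (n + ((e : ℕ) + 1 : ℕ) : ℤ) q := by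
          have h := hLpow e p q v hv
          have : (n + (((e : ℕ) + 1 : ℕ) : ℤ)) = p + 2 * e := by push_cast; omega
          rw [this]; exact h
        obtain ⟨u, hu, huL⟩ := hsurj (e + 1) q _ hv2
        have hu' : u ∈ V (p - 2) q := by
          have : (n - (((e : ℕ) + 1 : ℕ) : ℤ)) = p - 2 := by push_cast; omega
          rwa [this] at hu
        obtain ⟨c', h1, h2, h3, h4⟩ := ih (m - 1) (by omega) (p - 2) q (by omega) u hu'
        set w := v - L u with hw
        have hLu : L u ∈ V p q := by
          have h := hL (p - 2) q u hu'
          rwa [show p - 2 + 2 = p by ring] at h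
        have hwmem : w ∈ V p q := sub_mem hv hLu
        have hwprim : (L ^ e) w = 0 := by
          rw [hw, map_sub]
          have : (L ^ e) (L u) = (L ^ (e + 1)) u := by
            rw [pow_succ, Module.End.mul_apply]
          rw [this, huL, sub_self]
        set emb : ℕ ↪ ℕ := ⟨Nat.succ, Nat.succ_injective⟩ with hemb
        set c : ℕ →₀ W := Finsupp.single 0 w + Finsupp.embDomain emb c' with hc
        have hc0 : c 0 = w := by
          rw [hc, Finsupp.add_apply, Finsupp.single_eq_same,
            Finsupp.embDomain_notin_range _ _ _ (by simp [hemb]), add_zero]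
        have hcs : ∀ j : ℕ, c (j + 1) = c' j := by
          intro j
          rw [hc, Finsupp.add_apply, Finsupp.single_eq_of_ne (by omega)]
          have : (j + 1) = emb j := rfl
          rw [this, Finsupp.embDomain_apply_self, zero_add]
        refine ⟨c, ?_, ?_, ?_, ?_⟩
        · intro j
          cases j with
          | zero => rw [hc0]; simpa using hwmem
          | succ j =>
            rw [hcs j]
            have := h1 j
            have heq : (p - 2 - 2 * (j : ℤ)) = p - 2 * ((j : ℤ) + 1) := by ring
            rw [heq] at this
            have heq2 : p - 2 * ((j + 1 : ℕ) : ℤ) = p - 2 * ((j : ℤ) + 1) := by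
              push_cast; ring
            rw [heq2]; exact this
        · intro j hj
          have : max (p - n) 0 = 0 := max_eq_right (by omega)
          rw [this] at hj
          omega
        · intro j
          cases j with
          | zero =>
            rw [hc0]
            have : (n - (p - 2 * ((0 : ℕ) : ℤ)) + 1).toNat = e := by
              simp [he]
            rw [this]; exact hwprim
          | succ j =>
            rw [hcs j]
            have : (n - (p - 2 * ((j + 1 : ℕ) : ℤ)) + 1).toNat
                = (n - (p - 2 - 2 * (j : ℤ)) + 1).toNat := by
              congr 1; push_cast; ring
            rw [this]; exact h3 j
        · rw [hc, Finsupp.sum_add_index' (fun i => map_zero _) (fun i b1 b2 => map_add _ _ _),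
            Finsupp.sum_embDomain]
          have hsingle : ((Finsupp.single 0 w).sum fun j x => (L ^ j) x) = w := by
            rw [Finsupp.sum_single_index]
            · rw [pow_zero, Module.End.one_apply]
            · exact map_zero _
          rw [hsingle]
          have hs : (c'.sum fun j x => (L ^ (emb j)) x) = L (c'.sum fun j x => (L ^ j) x) := by
            rw [map_finsuppSum]
            apply Finsupp.sum_congr
            intro j _
            show (L ^ (j + 1)) _ = _
            rw [pow_succ', Module.End.mul_apply]
          rw [hs, ← h4, hw]
          abel
      · -- p > n : pull back through L^{p-n}
        set j0 := (p - n).toNat with hj0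
        have hj0z : (j0 : ℤ) = p - n := Int.toNat_of_nonneg (by omega)
        have hv' : v ∈ V (n + (j0 : ℤ)) q := by
          rw [show (n + (j0 : ℤ)) = p by omega]; exact hv
        obtain ⟨u, hu, huL⟩ := hsurj j0 q v hv'
        have hu' : u ∈ V (2 * n - p) q := by
          rwa [show (n - (j0 : ℤ)) = 2 * n - p by omega] at hu
        obtain ⟨c', h1, h2, h3, h4⟩ := ih (m - 1) (by omega) (2 * n - p) q (by omega) u hu'
        set emb : ℕ ↪ ℕ := ⟨fun j => j + j0, add_left_injective j0⟩ with hemb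
        set c : ℕ →₀ W := Finsupp.embDomain emb c' with hc
        have hclow : ∀ j : ℕ, j < j0 → c j = 0 := by
          intro j hj
          rw [hc]
          apply Finsupp.embDomain_notin_range
          rintro ⟨a, ha⟩
          simp only [hemb, Function.Embedding.coeFn_mk] at ha
          omega
        have hchigh : ∀ j : ℕ, c (j + j0) = c' j := by
          intro j
          rw [hc]
          have : (j + j0) = emb j := rfl
          rw [this, Finsupp.embDomain_apply_self]
        refine ⟨c, ?_, ?_, ?_, ?_⟩
        · intro j
          rcases lt_or_ge j j0 with hj | hj
          · rw [hclow j hj]; exact zero_mem _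
          · obtain ⟨a, rfl⟩ : ∃ a, j = a + j0 := ⟨j - j0, by omega⟩
            rw [hchigh a]
            have := h1 a
            have heq : (2 * n - p - 2 * (a : ℤ)) = p - 2 * ((a + j0 : ℕ) : ℤ) := by
              push_cast; omega
            rwa [heq] at this
        · intro j hj
          apply hclow
          have : max (p - n) 0 = p - n := max_eq_left (by omega)
          rw [this] at hj
          omega
        · intro j
          rcases lt_or_ge j j0 with hj | hj
          · rw [hclow j hj, map_zero]
          · obtain ⟨a, rfl⟩ : ∃ a, j = a + j0 := ⟨j - j0, by omega⟩
            rw [hchigh a]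
            have : (n - (p - 2 * ((a + j0 : ℕ) : ℤ)) + 1).toNat
                = (n - (2 * n - p - 2 * (a : ℤ)) + 1).toNat := by
              congr 1; push_cast; omega
            rw [this]; exact h3 a
        · rw [hc, Finsupp.sum_embDomain]
          have hs : (c'.sum fun j x => (L ^ (emb j)) x)
              = (L ^ j0) (c'.sum fun j x => (L ^ j) x) := by
            rw [map_finsuppSum]
            apply Finsupp.sum_congr
            intro j _
            show (L ^ (j + j0)) _ = _
            rw [add_comm, pow_add, Module.End.mul_apply]
          rw [hs, ← h4, huL]
  -- main statement
  intro p q v hv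
  obtain ⟨c, h1, h2, h3, h4⟩ := exist (p - B + 1).toNat p q (by omega) v hv
  refine ⟨c, ⟨h1, h2, h3, h4⟩, ?_⟩
  rintro c2 ⟨g1, g2, g3, g4⟩
  have hd : c2 - c = 0 := by
    apply key0 p q
    · intro j
      rw [Finsupp.sub_apply]
      exact sub_mem (g1 j) (h1 j)
    · intro j hj
      rw [Finsupp.sub_apply, g2 j hj, h2 j hj, sub_self]
    · intro j
      rw [Finsupp.sub_apply, map_sub, g3 j, h3 j, sub_self]
    · rw [Finsupp.sum_sub_index (fun a b1 b2 => map_sub _ _ _), ← g4, ← h4, sub_self]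
  exact sub_eq_zero.mp hd
end

section
/- Let V be a bigraded vector space with commuting operators L_σ of bidegree (2,0) and L_σ̄ of bidegree (0,2), each satisfying hard Lefschetz in its respective grading (L_σ^j : V^{n-j,q} ≅ V^{n+j,q} and L_σ̄^k : V^{p,n-k} ≅ V^{p,n+k}). Then every v ∈ V^{p,q} admits a simultaneous primitive decomposition: v = Σ_{j,k} L_σ^j L_σ̄^k v_{j,k} where each v_{j,k} ∈ V^{p-2j, q-2k} is primitive for both L_σ and L_σ̄. Consequently the dual Lefschetz operators commute: [Λ_σ, Λ_σ̄] = 0. -/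
private lemma auxPowDeg {W : Type*} [AddCommGroup W] [Module ℂ W]
    (A : ℤ → Submodule ℂ W) (L : Module.End ℂ W)
    (hdeg : ∀ p : ℤ, ∀ v ∈ A p, L v ∈ A (p + 2)) (t : ℕ) :
    ∀ p : ℤ, ∀ v ∈ A p, (L ^ t) v ∈ A (p + 2 * t) := by
  induction t with
  | zero => intro p v hv; simpa using hv
  | succ t ih =>
    intro p v hv
    have h1 := hdeg _ _ (ih p v hv)
    rw [show ((L : Module.End ℂ W) ^ (t + 1)) v = L ((L ^ t) v) by
      rw [pow_succ', Module.End.mul_apply]]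
    have : p + 2 * (t : ℤ) + 2 = p + 2 * ((t : ℕ) + 1 : ℕ) := by push_cast; ring
    exact this ▸ h1

private lemma auxInj {W : Type*} [AddCommGroup W] [Module ℂ W]
    (A : ℤ → Submodule ℂ W) (L : Module.End ℂ W) (n : ℤ)
    (hinj : ∀ j : ℕ, ∀ v ∈ A (n - j), (L ^ j) v = 0 → v = 0)
    (m t : ℕ) (h : t ≤ m) (v : W) (hv : v ∈ A (n - m)) (h0 : (L ^ t) v = 0) : v = 0 := by
  apply hinj m v hv
  have : (L : Module.End ℂ W) ^ m = L ^ (m - t) * L ^ t := by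
    rw [← pow_add]; congr 1; omega
  rw [this, Module.End.mul_apply, h0, map_zero]

private lemma auxCommId {W : Type*} [AddCommGroup W] [Module ℂ W]
    (A : ℤ → Submodule ℂ W) (L Λ : Module.End ℂ W) (n : ℤ)
    (hdeg : ∀ p : ℤ, ∀ v ∈ A p, L v ∈ A (p + 2))
    (hrel : ∀ p : ℤ, ∀ v ∈ A p, L (Λ v) = Λ (L v) + (((p : ℂ) - n)) • v) :
    ∀ t : ℕ, ∀ p : ℤ, ∀ v ∈ A p,
      (L ^ (t + 1)) (Λ v) =
        Λ ((L ^ (t + 1)) v) + (∑ i ∈ Finset.range (t + 1), ((p : ℂ) + 2 * i - n)) • (L ^ t) v := by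
  intro t
  induction t with
  | zero =>
    intro p v hv
    simpa using hrel p v hv
  | succ t ih =>
    intro p v hv
    have h1 : (L ^ (t + 2)) (Λ v) = L ((L ^ (t + 1)) (Λ v)) := by
      rw [pow_succ', Module.End.mul_apply]
    have hmem : (L ^ (t + 1)) v ∈ A (p + 2 * ((t : ℤ) + 1)) := by
      have := auxPowDeg A L hdeg (t + 1) p v hv
      have he : p + 2 * ((t : ℕ) + 1 : ℕ) = p + 2 * ((t : ℤ) + 1) := by push_cast; ring
      exact he ▸ this
    have h2 := hrel _ _ hmem
    rw [h1, ih p v hv, map_add, map_smul, h2]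
    have h3 : L ((L ^ t) v) = (L ^ (t + 1)) v := by rw [pow_succ', Module.End.mul_apply]
    have h4 : Λ (L ((L ^ (t + 1)) v)) = Λ ((L ^ (t + 2)) v) := by
      rw [pow_succ' L (t + 1), Module.End.mul_apply]
    rw [h3, h4, Finset.sum_range_succ _ (t + 1)]
    push_cast
    match_scalars <;> ring

private lemma auxGauss (m : ℕ) :
    ∑ i ∈ Finset.range (m + 1), (2 * (i : ℂ) - m) = 0 := by
  have h2 : ((∑ i ∈ Finset.range (m + 1), (i : ℕ) : ℕ) : ℂ) * 2 = (((m + 1) * m : ℕ) : ℂ) := by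
    exact_mod_cast congrArg (Nat.cast (R := ℂ)) (Finset.sum_range_id_mul_two (m + 1))
  push_cast at h2
  rw [Finset.sum_sub_distrib, ← Finset.mul_sum, Finset.sum_const, Finset.card_range,
    nsmul_eq_mul]
  push_cast
  linear_combination h2

/-- A primitive vector is killed by the dual Lefschetz operator. -/
private lemma auxLambdaPrim {W : Type*} [AddCommGroup W] [Module ℂ W]
    (A : ℤ → Submodule ℂ W) (L Λ : Module.End ℂ W) (n : ℤ)
    (hdeg : ∀ p : ℤ, ∀ v ∈ A p, L v ∈ A (p + 2))
    (hΛdeg : ∀ p : ℤ, ∀ v ∈ A p, Λ v ∈ A (p - 2))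
    (hinj : ∀ j : ℕ, ∀ v ∈ A (n - j), (L ^ j) v = 0 → v = 0)
    (hrel : ∀ p : ℤ, ∀ v ∈ A p, L (Λ v) = Λ (L v) + (((p : ℂ) - n)) • v)
    (m : ℕ) (u : W) (hu : u ∈ A (n - m)) (hpu : (L ^ (m + 1)) u = 0) : Λ u = 0 := by
  have hΛu : Λ u ∈ A (n - ((m : ℕ) + 2 : ℕ)) := by
    have := hΛdeg _ _ hu
    have he : n - (m : ℤ) - 2 = n - ((m : ℕ) + 2 : ℕ) := by push_cast; ring
    exact he ▸ this
  refine auxInj A L n hinj (m + 2) (m + 1) (by omega) _ hΛu ?_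
  have hid := auxCommId A L Λ n hdeg hrel m _ u hu
  rw [hpu, map_zero, zero_add] at hid
  rw [hid]
  have hsum : ∑ i ∈ Finset.range (m + 1), ((((n - m : ℤ)) : ℂ) + 2 * i - n) = 0 := by
    rw [← auxGauss m]
    refine Finset.sum_congr rfl fun i _ => ?_
    push_cast; ring
  rw [hsum, zero_smul]

/-- Action of the dual Lefschetz operator on `L` powers of a primitive vector. -/
private lemma auxLambdaPow {W : Type*} [AddCommGroup W] [Module ℂ W]
    (A : ℤ → Submodule ℂ W) (L Λ : Module.End ℂ W) (n : ℤ)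
    (hdeg : ∀ p : ℤ, ∀ v ∈ A p, L v ∈ A (p + 2))
    (hΛdeg : ∀ p : ℤ, ∀ v ∈ A p, Λ v ∈ A (p - 2))
    (hinj : ∀ j : ℕ, ∀ v ∈ A (n - j), (L ^ j) v = 0 → v = 0)
    (hrel : ∀ p : ℤ, ∀ v ∈ A p, L (Λ v) = Λ (L v) + (((p : ℂ) - n)) • v)
    (m : ℕ) (u : W) (hu : u ∈ A (n - m)) (hpu : (L ^ (m + 1)) u = 0) :
    ∀ t : ℕ, Λ ((L ^ (t + 1)) u) = (((t : ℂ) + 1) * ((m : ℂ) - t)) • (L ^ t) u := by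
  have h0 : Λ u = 0 := auxLambdaPrim A L Λ n hdeg hΛdeg hinj hrel m u hu hpu
  intro t
  induction t with
  | zero =>
    have h := hrel _ _ hu
    rw [h0, map_zero] at h
    have h1 : Λ (L u) = -(((((n - (m : ℤ) : ℤ)) : ℂ) - n) • u) := eq_neg_of_add_eq_zero_left h.symm
    rw [pow_one, h1, ← neg_smul]
    simp only [pow_zero, Module.End.one_apply]
    match_scalars
    push_cast; ring
  | succ t ih =>
    have hmem0 := auxPowDeg A L hdeg (t + 1) _ u hu
    have he : n - (m : ℤ) + 2 * ((t + 1 : ℕ) : ℤ) = n - (m : ℤ) + 2 * ((t : ℤ) + 1) := by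
      push_cast; ring
    have hmem : (L ^ (t + 1)) u ∈ A (n - (m : ℤ) + 2 * ((t : ℤ) + 1)) := he ▸ hmem0
    have h := hrel _ _ hmem
    rw [ih, map_smul] at h
    have h2 : L ((L ^ t) u) = (L ^ (t + 1)) u := by rw [pow_succ', Module.End.mul_apply]
    have h3 : L ((L ^ (t + 1)) u) = (L ^ (t + 2)) u :=
      (LinearMap.congr_fun (pow_succ' L (t + 1)) u).symm
    rw [h2, h3] at h
    have h4 : Λ ((L ^ (t + 2)) u) =
        (((t : ℂ) + 1) * ((m : ℂ) - t)) • (L ^ (t + 1)) u -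
          ((((n - (m : ℤ) + 2 * ((t : ℤ) + 1)) : ℤ) : ℂ) - n) • (L ^ (t + 1)) u :=
      eq_sub_of_add_eq h.symm
    rw [show t + 1 + 1 = t + 2 from rfl, h4, ← sub_smul]
    match_scalars
    push_cast; ring

private lemma auxExist {W : Type*} [AddCommGroup W] [Module ℂ W]
    (A : ℤ → Submodule ℂ W) (L : Module.End ℂ W) (n B : ℤ)
    (hdeg : ∀ p : ℤ, ∀ v ∈ A p, L v ∈ A (p + 2))
    (hsurj : ∀ j : ℕ, ∀ w ∈ A (n + j), ∃ v ∈ A (n - j), (L ^ j) v = w)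
    (hbot : ∀ p : ℤ, p < B → A p = ⊥) :
    ∀ p : ℤ, ∀ v ∈ A p, ∃ c : ℕ →₀ W,
      (∀ j : ℕ, c j ∈ A (p - 2 * j)) ∧
      (∀ j : ℕ, (L ^ (n - (p - 2 * j) + 1).toNat) (c j) = 0) ∧
      v = c.sum fun j w => (L ^ j) w := by
  suffices h : ∀ N : ℕ, ∀ p : ℤ, p < B + N → ∀ v ∈ A p, ∃ c : ℕ →₀ W,
      (∀ j : ℕ, c j ∈ A (p - 2 * j)) ∧
      (∀ j : ℕ, (L ^ (n - (p - 2 * j) + 1).toNat) (c j) = 0) ∧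
      v = c.sum fun j w => (L ^ j) w by
    intro p v hv
    exact h (p - B + 1).toNat p (by omega) v hv
  intro N
  induction N with
  | zero =>
    intro p hp v hv
    rw [hbot p (by omega)] at hv
    exact ⟨0, by simp, by simp, by simp [(Submodule.mem_bot ℂ).mp hv]⟩
  | succ N ih =>
    intro p hp v hv
    by_cases hpB : p < B
    · rw [hbot p hpB] at hv
      exact ⟨0, by simp, by simp, by simp [(Submodule.mem_bot ℂ).mp hv]⟩
    by_cases hpn : p ≤ n
    · -- primitive reduction
      obtain ⟨m, hm⟩ : ∃ m : ℕ, (m : ℤ) = n - p := ⟨(n - p).toNat, by omega⟩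
      have h1 : (L ^ (m + 1)) v ∈ A (n + ((m + 2 : ℕ) : ℤ)) := by
        have h := auxPowDeg A L hdeg (m + 1) p v hv
        have he : p + 2 * ((m + 1 : ℕ) : ℤ) = n + ((m + 2 : ℕ) : ℤ) := by push_cast; omega
        exact he ▸ h
      obtain ⟨w, hw, hww⟩ := hsurj (m + 2) _ h1
      have hw' : w ∈ A (p - 2) := by
        have he : n - ((m + 2 : ℕ) : ℤ) = p - 2 := by push_cast; omega
        exact he ▸ hw
      obtain ⟨c, hc1, hc2, hc3⟩ := ih (p - 2) (by omega) w hw'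
      have hLw : L w ∈ A p := by
        have h := hdeg _ _ hw'
        have he : p - 2 + 2 = p := by ring
        exact he ▸ h
      have hup : (L ^ (m + 1)) (v - L w) = 0 := by
        have h5 : (L ^ (m + 1)) (L w) = (L ^ (m + 2)) w :=
          (LinearMap.congr_fun (pow_succ L (m + 1)) w).symm
        rw [map_sub, h5, hww, sub_self]
      set e : ℕ ↪ ℕ := ⟨Nat.succ, Nat.succ_injective⟩ with he_def
      set d : ℕ →₀ W := Finsupp.single 0 (v - L w) + Finsupp.embDomain e c with hd_def
      have happ0 : d 0 = v - L w := by
        rw [hd_def, Finsupp.add_apply, Finsupp.single_eq_same,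
          Finsupp.embDomain_notin_range, add_zero]
        rintro ⟨a, ha⟩
        exact Nat.succ_ne_zero a ha
      have happs : ∀ j : ℕ, d (j + 1) = c j := by
        intro j
        rw [hd_def, Finsupp.add_apply,
          Finsupp.single_eq_of_ne' (Nat.zero_ne_add_one j), zero_add]
        exact Finsupp.embDomain_apply_self e c j
      refine ⟨d, ?_, ?_, ?_⟩
      · intro j
        cases j with
        | zero =>
          rw [happ0]
          have he : p = p - 2 * ((0 : ℕ) : ℤ) := by push_cast; ring
          exact he ▸ sub_mem hv hLw
        | succ j =>
          rw [happs j]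
          have he : p - 2 - 2 * (j : ℤ) = p - 2 * ((j + 1 : ℕ) : ℤ) := by push_cast; ring
          exact he ▸ hc1 j
      · intro j
        cases j with
        | zero =>
          rw [happ0, show (n - (p - 2 * ((0 : ℕ) : ℤ)) + 1).toNat = m + 1 by omega]
          exact hup
        | succ j =>
          rw [happs j, show (n - (p - 2 * ((j + 1 : ℕ) : ℤ)) + 1).toNat
            = (n - (p - 2 - 2 * (j : ℤ)) + 1).toNat by push_cast; omega]
          exact hc2 j
      · have hz : ∀ j : ℕ, (L ^ j) (0 : W) = 0 := fun j => map_zero _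
        rw [hd_def, Finsupp.sum_add_index' hz (fun j w₁ w₂ => map_add _ _ _),
          Finsupp.sum_single_index (h := fun (j : ℕ) (w' : W) => (L ^ j) w') (hz 0),
          Finsupp.sum_embDomain]
        have h6 : ((L : Module.End ℂ W) ^ (0 : ℕ)) (v - L w) = v - L w := by
          rw [pow_zero, Module.End.one_apply]
        have h7 : (c.sum fun a b => (L ^ e a) b) = L (c.sum fun j w => (L ^ j) w) := by
          rw [map_finsuppSum]
          exact Finsupp.sum_congr fun j _ =>
            LinearMap.congr_fun (pow_succ' L j) (c j)
        rw [h6, h7, ← hc3]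
        abel
    · -- surjectivity reduction
      push_neg at hpn
      obtain ⟨j0, hj0⟩ : ∃ j0 : ℕ, (j0 : ℤ) = p - n := ⟨(p - n).toNat, by omega⟩
      have hv' : v ∈ A (n + (j0 : ℤ)) := by
        have he : p = n + (j0 : ℤ) := by omega
        exact he ▸ hv
      obtain ⟨w, hw, hww⟩ := hsurj j0 v hv'
      obtain ⟨c, hc1, hc2, hc3⟩ := ih (n - j0) (by omega) w hw
      set e : ℕ ↪ ℕ := ⟨fun i => i + j0, add_left_injective j0⟩ with he_def
      have hea : ∀ a : ℕ, (Finsupp.embDomain e c) (a + j0) = c a := fun a =>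
        Finsupp.embDomain_apply_self e c a
      have he0 : ∀ i : ℕ, i < j0 → (Finsupp.embDomain e c) i = 0 := by
        intro i hi
        refine Finsupp.embDomain_notin_range e c i ?_
        rintro ⟨a, ha⟩
        simp only [e, Function.Embedding.coeFn_mk] at ha
        omega
      refine ⟨Finsupp.embDomain e c, ?_, ?_, ?_⟩
      · intro i
        rcases Nat.lt_or_ge i j0 with hi | hi
        · rw [he0 i hi]; exact zero_mem _
        · obtain ⟨a, rfl⟩ : ∃ a : ℕ, i = a + j0 := ⟨i - j0, by omega⟩
          rw [hea a]
          have he : n - (j0 : ℤ) - 2 * (a : ℤ) = p - 2 * ((a + j0 : ℕ) : ℤ) := by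
            push_cast; omega
          exact he ▸ hc1 a
      · intro i
        rcases Nat.lt_or_ge i j0 with hi | hi
        · rw [he0 i hi]; exact map_zero _
        · obtain ⟨a, rfl⟩ : ∃ a : ℕ, i = a + j0 := ⟨i - j0, by omega⟩
          rw [hea a, show (n - (p - 2 * ((a + j0 : ℕ) : ℤ)) + 1).toNat
            = (n - (n - (j0 : ℤ) - 2 * (a : ℤ)) + 1).toNat by push_cast; omega]
          exact hc2 a
      · rw [Finsupp.sum_embDomain]
        have h7 : (c.sum fun a b => (L ^ e a) b)
            = (L ^ j0) (c.sum fun j w => (L ^ j) w) := by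
          rw [map_finsuppSum]
          refine Finsupp.sum_congr fun a _ => ?_
          have : (L : Module.End ℂ W) ^ (a + j0) = L ^ j0 * L ^ a := by
            rw [← pow_add]; congr 1; omega
          show ((L : Module.End ℂ W) ^ (a + j0)) (c a) = (L ^ j0) ((L ^ a) (c a))
          rw [this, Module.End.mul_apply]
        rw [h7, ← hc3, hww]

private lemma auxUnique {W : Type*} [AddCommGroup W] [Module ℂ W]
    (A : ℤ → Submodule ℂ W) (L : Module.End ℂ W) (n : ℤ)
    (hinj : ∀ j : ℕ, ∀ v ∈ A (n - j), (L ^ j) v = 0 → v = 0)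
    (p : ℤ) (hpn : p ≤ n) :
    ∀ N : ℕ, ∀ c : ℕ →₀ W,
      (∀ j : ℕ, c j ∈ A (p - 2 * j)) →
      (∀ j : ℕ, (L ^ (n - (p - 2 * j) + 1).toNat) (c j) = 0) →
      (∀ j : ℕ, N ≤ j → c j = 0) →
      (c.sum fun j w => (L ^ j) w) = 0 → ∀ j : ℕ, c j = 0 := by
  intro N
  induction N with
  | zero => intro c _ _ hN _ j; exact hN j (Nat.zero_le j)
  | succ N ih =>
    intro c h1 h2 hN hsum
    obtain ⟨m, hm⟩ : ∃ m : ℕ, (m : ℤ) = n - p := ⟨(n - p).toNat, by omega⟩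
    have hexp : ∀ j : ℕ, (n - (p - 2 * (j : ℤ)) + 1).toNat = m + 2 * j + 1 := by
      intro j; omega
    have hcN : c N = 0 := by
      have h3 : (c.sum fun j w => (L ^ (m + N + j)) w) = 0 := by
        calc c.sum (fun j w => (L ^ (m + N + j)) w)
            = (L ^ (m + N)) (c.sum fun j w => (L ^ j) w) := by
              rw [map_finsuppSum]
              refine Finsupp.sum_congr fun j _ => ?_
              show ((L : Module.End ℂ W) ^ (m + N + j)) (c j) = (L ^ (m + N)) ((L ^ j) (c j))
              rw [pow_add, Module.End.mul_apply]
          _ = 0 := by rw [hsum, map_zero]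
      have h4 : (c.sum fun j w => (L ^ (m + N + j)) w) = (L ^ (m + N + N)) (c N) := by
        rw [Finsupp.sum]
        refine Finset.sum_eq_single N (fun j hj hjN => ?_) (fun hNs => ?_)
        · rcases lt_or_gt_of_ne hjN with hlt | hgt
          · have h5 : ((L : Module.End ℂ W) ^ (m + N + j)) (c j)
                = (L ^ ((m + N + j) - (m + 2 * j + 1))) ((L ^ (m + 2 * j + 1)) (c j)) := by
              rw [← Module.End.mul_apply, ← pow_add,
                show m + N + j - (m + 2 * j + 1) + (m + 2 * j + 1) = m + N + j from by omega]
            have h6 := h2 j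
            rw [hexp j] at h6
            rw [h5, h6, map_zero]
          · rw [hN j hgt, map_zero]
        · rw [Finsupp.notMem_support_iff.mp hNs, map_zero]
      rw [h4] at h3
      have hmem : c N ∈ A (n - ((m + 2 * N : ℕ) : ℤ)) := by
        have h7 := h1 N
        have he : p - 2 * (N : ℤ) = n - ((m + 2 * N : ℕ) : ℤ) := by push_cast; omega
        exact he ▸ h7
      refine auxInj A L n hinj (m + 2 * N) (m + N + N) (by omega) _ hmem h3
    refine ih c h1 h2 (fun j hj => ?_) hsum
    rcases Nat.eq_or_lt_of_le hj with he | hlt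
    · rw [← he]; exact hcN
    · exact hN j hlt

private lemma doubleDecompLow {W : Type*} [AddCommGroup W] [Module ℂ W]
    (V : ℤ → ℤ → Submodule ℂ W) (n B : ℤ) (Lσ Lσb : Module.End ℂ W)
    (hLσ : ∀ p q : ℤ, ∀ v ∈ V p q, Lσ v ∈ V (p + 2) q)
    (hLσb : ∀ p q : ℤ, ∀ v ∈ V p q, Lσb v ∈ V p (q + 2))
    (hC : ∀ a b : ℕ, ∀ x : W, (Lσ ^ a) ((Lσb ^ b) x) = (Lσb ^ b) ((Lσ ^ a) x))
    (hsurjσ : ∀ j : ℕ, ∀ q : ℤ, ∀ w ∈ V (n + j) q, ∃ v ∈ V (n - j) q, (Lσ ^ j) v = w)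
    (hsurjσb : ∀ k : ℕ, ∀ p : ℤ, ∀ w ∈ V p (n + k), ∃ v ∈ V p (n - k), (Lσb ^ k) v = w)
    (hinjσb : ∀ k : ℕ, ∀ p : ℤ, ∀ v ∈ V p (n - k), (Lσb ^ k) v = 0 → v = 0)
    (hbot : ∀ p q : ℤ, p < B ∨ q < B → V p q = ⊥)
    (p q : ℤ) (hq : q ≤ n) :
    ∀ v ∈ V p q, ∃ c : ℕ × ℕ →₀ W,
      (∀ jk : ℕ × ℕ, c jk ∈ V (p - 2 * jk.1) (q - 2 * jk.2)) ∧
      (∀ jk : ℕ × ℕ, (Lσ ^ (n - (p - 2 * jk.1) + 1).toNat) (c jk) = 0) ∧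
      (∀ jk : ℕ × ℕ, (Lσb ^ (n - (q - 2 * jk.2) + 1).toNat) (c jk) = 0) ∧
      v = c.sum fun jk w => (Lσ ^ jk.1) ((Lσb ^ jk.2) w) := by
  intro v hv
  obtain ⟨c, hc1, hc2, hc3⟩ := auxExist (fun p' => V p' q) Lσ n B
    (fun p' => hLσ p' q) (fun j => hsurjσ j q) (fun p' hp' => hbot p' q (Or.inl hp'))
    p v hv
  have hD : ∀ j : ℕ, ∃ d : ℕ →₀ W,
      (∀ k : ℕ, d k ∈ V (p - 2 * j) (q - 2 * k)) ∧
      (∀ k : ℕ, (Lσb ^ (n - (q - 2 * k) + 1).toNat) (d k) = 0) ∧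
      c j = d.sum (fun k w => (Lσb ^ k) w) ∧ (c j = 0 → d = 0) := by
    intro j
    by_cases h : c j = 0
    · exact ⟨0, by simp, by simp, by simp [h], fun _ => rfl⟩
    · obtain ⟨d, hd1, hd2, hd3⟩ := auxExist (fun q' => V (p - 2 * j) q') Lσb n B
        (fun q' => hLσb (p - 2 * j) q') (fun k => hsurjσb k (p - 2 * j))
        (fun q' hq' => hbot (p - 2 * j) q' (Or.inr hq')) q (c j) (hc1 j)
      exact ⟨d, hd1, hd2, hd3, fun hcj => absurd hcj h⟩
  choose D hD1 hD2 hD3 hD0 using hD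
  have hprim : ∀ j k : ℕ, (Lσ ^ (n - (p - 2 * (j : ℤ)) + 1).toNat) (D j k) = 0 := by
    intro j k
    set e : ℕ := (n - (p - 2 * (j : ℤ)) + 1).toNat with he_def
    set E : ℕ →₀ W := (D j).mapRange (⇑(Lσ ^ e)) (map_zero _) with hE_def
    have hEapp : ∀ k : ℕ, E k = (Lσ ^ e) (D j k) := fun k => Finsupp.mapRange_apply
    have hmem : ∀ k : ℕ, E k ∈ V (p - 2 * (j : ℤ) + 2 * (e : ℤ)) (q - 2 * k) := by
      intro k
      rw [hEapp k]
      exact auxPowDeg (fun p' => V p' (q - 2 * k)) Lσ (fun p' => hLσ p' (q - 2 * k)) e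
        (p - 2 * j) (D j k) (hD1 j k)
    have hprimb : ∀ k : ℕ, (Lσb ^ (n - (q - 2 * (k : ℤ)) + 1).toNat) (E k) = 0 := by
      intro k
      rw [hEapp k, ← hC, hD2 j k, map_zero]
    have hsupp : ∀ k : ℕ, ((D j).support.sup id) + 1 ≤ k → E k = 0 := by
      intro k hk
      rw [hEapp k, Finsupp.notMem_support_iff.mp, map_zero]
      intro hmem'
      have := Finset.le_sup (f := id) hmem'
      simp only [id] at this
      omega
    have hsum : (E.sum fun k w => (Lσb ^ k) w) = 0 := by
      rw [hE_def, Finsupp.sum_mapRange_index (fun k => map_zero _)]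
      have h8 : ((D j).sum fun k w => (Lσb ^ k) ((Lσ ^ e) w))
          = (Lσ ^ e) ((D j).sum fun k w => (Lσb ^ k) w) := by
        rw [map_finsuppSum]
        exact Finsupp.sum_congr fun k _ => (hC e k (D j k)).symm
      rw [h8, ← hD3 j, hc2 j]
    have := auxUnique (fun q' => V (p - 2 * (j : ℤ) + 2 * (e : ℤ)) q') Lσb n
      (fun k' => hinjσb k' (p - 2 * (j : ℤ) + 2 * (e : ℤ))) q hq
      (((D j).support.sup id) + 1) E hmem hprimb hsupp hsum k
    rw [hEapp k] at this
    exact this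
  set T : Finset ℕ := c.support.biUnion (fun j => (D j).support) with hT_def
  set S : Finset (ℕ × ℕ) := c.support ×ˢ T with hS_def
  have hF : ∀ jk : ℕ × ℕ, (fun jk : ℕ × ℕ => D jk.1 jk.2) jk ≠ 0 → jk ∈ S := by
    intro jk hne
    have hcj : c jk.1 ≠ 0 := by
      intro h
      apply hne
      show D jk.1 jk.2 = 0
      rw [hD0 jk.1 h]
      rfl
    have hk : jk.2 ∈ (D jk.1).support := Finsupp.mem_support_iff.mpr hne
    refine Finset.mem_product.mpr ⟨Finsupp.mem_support_iff.mpr hcj, ?_⟩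
    exact Finset.mem_biUnion.mpr ⟨jk.1, Finsupp.mem_support_iff.mpr hcj, hk⟩
  refine ⟨Finsupp.onFinset S (fun jk => D jk.1 jk.2) hF, ?_, ?_, ?_, ?_⟩
  · intro jk; rw [Finsupp.onFinset_apply]; exact hD1 jk.1 jk.2
  · intro jk; rw [Finsupp.onFinset_apply]; exact hprim jk.1 jk.2
  · intro jk; rw [Finsupp.onFinset_apply]; exact hD2 jk.1 jk.2
  · rw [Finsupp.sum_of_support_subset (Finsupp.onFinset S (fun jk => D jk.1 jk.2) hF)
      Finsupp.support_onFinset_subset (fun jk w => (Lσ ^ jk.1) ((Lσb ^ jk.2) w))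
      (fun i _ => by simp)]
    have hstep : ∀ j ∈ c.support,
        (∑ k ∈ T, (Lσ ^ j) ((Lσb ^ k) (D j k))) = (Lσ ^ j) (c j) := by
      intro j hj
      rw [← map_sum]
      congr 1
      rw [hD3 j, Finsupp.sum_of_support_subset (D j)
        (show (D j).support ⊆ T from fun k hk => Finset.mem_biUnion.mpr ⟨j, hj, hk⟩)
        (fun k w => (Lσb ^ k) w) (fun i _ => map_zero _)]
    calc v = c.sum fun j w => (Lσ ^ j) w := hc3
      _ = ∑ j ∈ c.support, (Lσ ^ j) (c j) := rfl
      _ = ∑ j ∈ c.support, ∑ k ∈ T, (Lσ ^ j) ((Lσb ^ k) (D j k)) :=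
          (Finset.sum_congr rfl hstep).symm
      _ = ∑ jk ∈ S, (Lσ ^ jk.1) ((Lσb ^ jk.2) ((fun jk : ℕ × ℕ => D jk.1 jk.2) jk)) := by
          rw [hS_def, Finset.sum_product]

private lemma doubleDecompFull {W : Type*} [AddCommGroup W] [Module ℂ W]
    (V : ℤ → ℤ → Submodule ℂ W) (n B : ℤ) (Lσ Lσb : Module.End ℂ W)
    (hLσ : ∀ p q : ℤ, ∀ v ∈ V p q, Lσ v ∈ V (p + 2) q)
    (hLσb : ∀ p q : ℤ, ∀ v ∈ V p q, Lσb v ∈ V p (q + 2))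
    (hC : ∀ a b : ℕ, ∀ x : W, (Lσ ^ a) ((Lσb ^ b) x) = (Lσb ^ b) ((Lσ ^ a) x))
    (hsurjσ : ∀ j : ℕ, ∀ q : ℤ, ∀ w ∈ V (n + j) q, ∃ v ∈ V (n - j) q, (Lσ ^ j) v = w)
    (hsurjσb : ∀ k : ℕ, ∀ p : ℤ, ∀ w ∈ V p (n + k), ∃ v ∈ V p (n - k), (Lσb ^ k) v = w)
    (hinjσb : ∀ k : ℕ, ∀ p : ℤ, ∀ v ∈ V p (n - k), (Lσb ^ k) v = 0 → v = 0)
    (hbot : ∀ p q : ℤ, p < B ∨ q < B → V p q = ⊥)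
    (p q : ℤ) :
    ∀ v ∈ V p q, ∃ c : ℕ × ℕ →₀ W,
      (∀ jk : ℕ × ℕ, c jk ∈ V (p - 2 * jk.1) (q - 2 * jk.2)) ∧
      (∀ jk : ℕ × ℕ, (Lσ ^ (n - (p - 2 * jk.1) + 1).toNat) (c jk) = 0) ∧
      (∀ jk : ℕ × ℕ, (Lσb ^ (n - (q - 2 * jk.2) + 1).toNat) (c jk) = 0) ∧
      v = c.sum fun jk w => (Lσ ^ jk.1) ((Lσb ^ jk.2) w) := by
  intro v hv
  by_cases hq : q ≤ n
  · exact doubleDecompLow V n B Lσ Lσb hLσ hLσb hC hsurjσ hsurjσb hinjσb hbot p q hq v hv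
  push_neg at hq
  obtain ⟨k0, hk0⟩ : ∃ k0 : ℕ, (k0 : ℤ) = q - n := ⟨(q - n).toNat, by omega⟩
  have hv' : v ∈ V p (n + (k0 : ℤ)) := by
    have he : q = n + (k0 : ℤ) := by omega
    exact he ▸ hv
  obtain ⟨w, hw, hww⟩ := hsurjσb k0 p v hv'
  obtain ⟨c, hc1, hc2, hc3, hc4⟩ := doubleDecompLow V n B Lσ Lσb hLσ hLσb hC hsurjσ
    hsurjσb hinjσb hbot p (n - k0) (by omega) w hw
  set e : ℕ × ℕ ↪ ℕ × ℕ :=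
    ⟨fun jk => (jk.1, jk.2 + k0), fun a b h => by
      have h1 := congrArg Prod.fst h
      have h2 := congrArg Prod.snd h
      simp only [] at h1 h2
      exact Prod.ext h1 (by omega)⟩ with he_def
  have hea : ∀ a : ℕ × ℕ, (Finsupp.embDomain e c) (a.1, a.2 + k0) = c a := fun a =>
    Finsupp.embDomain_apply_self e c a
  have he0 : ∀ i : ℕ × ℕ, i.2 < k0 → (Finsupp.embDomain e c) i = 0 := by
    intro i hi
    refine Finsupp.embDomain_notin_range e c i ?_
    rintro ⟨a, ha⟩
    simp only [e, Function.Embedding.coeFn_mk] at ha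
    have := congrArg Prod.snd ha
    replace this : a.2 + k0 = i.2 := this
    omega
  refine ⟨Finsupp.embDomain e c, ?_, ?_, ?_, ?_⟩
  · intro jk
    rcases Nat.lt_or_ge jk.2 k0 with hi | hi
    · rw [he0 jk hi]; exact zero_mem _
    · obtain ⟨a, rfl⟩ : ∃ a : ℕ × ℕ, jk = (a.1, a.2 + k0) :=
        ⟨(jk.1, jk.2 - k0), by ext <;> simp <;> omega⟩
      rw [hea a]
      have he2 : n - (k0 : ℤ) - 2 * (a.2 : ℤ) = q - 2 * ((a.2 + k0 : ℕ) : ℤ) := by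
        push_cast; omega
      exact he2 ▸ hc1 a
  · intro jk
    rcases Nat.lt_or_ge jk.2 k0 with hi | hi
    · rw [he0 jk hi]; exact map_zero _
    · obtain ⟨a, rfl⟩ : ∃ a : ℕ × ℕ, jk = (a.1, a.2 + k0) :=
        ⟨(jk.1, jk.2 - k0), by ext <;> simp <;> omega⟩
      rw [hea a]
      exact hc2 a
  · intro jk
    rcases Nat.lt_or_ge jk.2 k0 with hi | hi
    · rw [he0 jk hi]; exact map_zero _
    · obtain ⟨a, rfl⟩ : ∃ a : ℕ × ℕ, jk = (a.1, a.2 + k0) :=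
        ⟨(jk.1, jk.2 - k0), by ext <;> simp <;> omega⟩
      rw [hea a, show (n - (q - 2 * ((a.2 + k0 : ℕ) : ℤ)) + 1).toNat
        = (n - (n - (k0 : ℤ) - 2 * (a.2 : ℤ)) + 1).toNat by push_cast; omega]
      exact hc3 a
  · rw [Finsupp.sum_embDomain]
    have h7 : (c.sum fun a b => (Lσ ^ (e a).1) ((Lσb ^ (e a).2) b))
        = (Lσb ^ k0) (c.sum fun jk w => (Lσ ^ jk.1) ((Lσb ^ jk.2) w)) := by
      rw [map_finsuppSum]
      refine Finsupp.sum_congr fun a _ => ?_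
      show (Lσ ^ a.1) ((Lσb ^ (a.2 + k0)) (c a)) = (Lσb ^ k0) ((Lσ ^ a.1) ((Lσb ^ a.2) (c a)))
      rw [← hC a.1 k0]
      congr 1
      rw [← Module.End.mul_apply, ← pow_add, Nat.add_comm a.2 k0]
    rw [h7, ← hc4, hww]

private lemma keyVanish {W : Type*} [AddCommGroup W] [Module ℂ W]
    (V : ℤ → ℤ → Submodule ℂ W) (n : ℤ) (Lσ Lσb Λσ Λσb : Module.End ℂ W)
    (hLσ : ∀ p q : ℤ, ∀ v ∈ V p q, Lσ v ∈ V (p + 2) q)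
    (hLσb : ∀ p q : ℤ, ∀ v ∈ V p q, Lσb v ∈ V p (q + 2))
    (hC : ∀ a b : ℕ, ∀ x : W, (Lσ ^ a) ((Lσb ^ b) x) = (Lσb ^ b) ((Lσ ^ a) x))
    (hinjσ : ∀ j : ℕ, ∀ q : ℤ, ∀ v ∈ V (n - j) q, (Lσ ^ j) v = 0 → v = 0)
    (hinjσb : ∀ k : ℕ, ∀ p : ℤ, ∀ v ∈ V p (n - k), (Lσb ^ k) v = 0 → v = 0)
    (hΛσdeg : ∀ p q : ℤ, ∀ v ∈ V p q, Λσ v ∈ V (p - 2) q)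
    (hΛσbdeg : ∀ p q : ℤ, ∀ v ∈ V p q, Λσb v ∈ V p (q - 2))
    (hrelσ : ∀ p q : ℤ, ∀ v ∈ V p q, Lσ (Λσ v) = Λσ (Lσ v) + ((p : ℂ) - n) • v)
    (hrelσb : ∀ p q : ℤ, ∀ v ∈ V p q, Lσb (Λσb v) = Λσb (Lσb v) + ((q : ℂ) - n) • v)
    (p' q' : ℤ) (u : W) (hu : u ∈ V p' q')
    (hpσ : (Lσ ^ (n - p' + 1).toNat) u = 0)
    (hpσb : (Lσb ^ (n - q' + 1).toNat) u = 0)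
    (j k : ℕ) :
    Λσ (Λσb ((Lσ ^ j) ((Lσb ^ k) u))) = Λσb (Λσ ((Lσ ^ j) ((Lσb ^ k) u))) := by
  by_cases hp'n : n - p' + 1 ≤ 0
  · have hu0 : u = 0 := by
      rw [show (n - p' + 1).toNat = 0 from by omega, pow_zero, Module.End.one_apply] at hpσ
      exact hpσ
    simp [hu0]
  by_cases hq'n : n - q' + 1 ≤ 0
  · have hu0 : u = 0 := by
      rw [show (n - q' + 1).toNat = 0 from by omega, pow_zero, Module.End.one_apply] at hpσb
      exact hpσb
    simp [hu0]
  push_neg at hp'n hq'n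
  obtain ⟨m, hm⟩ : ∃ m : ℕ, (m : ℤ) = n - p' := ⟨(n - p').toNat, by omega⟩
  obtain ⟨mb, hmb⟩ : ∃ mb : ℕ, (mb : ℤ) = n - q' := ⟨(n - q').toNat, by omega⟩
  rw [show (n - p' + 1).toNat = m + 1 from by omega] at hpσ
  rw [show (n - q' + 1).toNat = mb + 1 from by omega] at hpσb
  -- transported primitivity and memberships
  have F1 : ∀ b : ℕ, (Lσ ^ (m + 1)) ((Lσb ^ b) u) = 0 := fun b => by
    rw [hC (m + 1) b u, hpσ, map_zero]
  have F2 : ∀ a : ℕ, (Lσb ^ (mb + 1)) ((Lσ ^ a) u) = 0 := fun a => by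
    rw [← hC a (mb + 1) u, hpσb, map_zero]
  have M1 : ∀ b : ℕ, (Lσb ^ b) u ∈ V (n - (m : ℤ)) (q' + 2 * b) := by
    intro b
    have h := auxPowDeg (fun q'' => V p' q'') Lσb (fun q'' => hLσb p' q'') b q' u hu
    exact (show p' = n - (m : ℤ) from by omega) ▸ h
  have M2 : ∀ a : ℕ, (Lσ ^ a) u ∈ V (p' + 2 * a) (n - (mb : ℤ)) := by
    intro a
    have h := auxPowDeg (fun p'' => V p'' q') Lσ (fun p'' => hLσ p'' q') a p' u hu
    exact (show q' = n - (mb : ℤ) from by omega) ▸ h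
  -- Λσ kills σ-primitive vectors in every row
  have hΛσ_on : ∀ b : ℕ, Λσ ((Lσb ^ b) u) = 0 := by
    intro b
    exact auxLambdaPrim (fun p'' => V p'' (q' + 2 * (b : ℤ))) Lσ Λσ n
      (fun p'' => hLσ p'' (q' + 2 * b)) (fun p'' => hΛσdeg p'' (q' + 2 * b))
      (fun j' => hinjσ j' (q' + 2 * b)) (fun p'' v hv => hrelσ p'' (q' + 2 * b) v hv)
      m ((Lσb ^ b) u) (M1 b) (F1 b)
  have hΛσb_on : ∀ a : ℕ, Λσb ((Lσ ^ a) u) = 0 := by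
    intro a
    exact auxLambdaPrim (fun q'' => V (p' + 2 * (a : ℤ)) q'') Lσb Λσb n
      (fun q'' => hLσb (p' + 2 * a) q'') (fun q'' => hΛσbdeg (p' + 2 * a) q'')
      (fun k' => hinjσb k' (p' + 2 * a)) (fun q'' v hv => hrelσb (p' + 2 * a) q'' v hv)
      mb ((Lσ ^ a) u) (M2 a) (F2 a)
  have hΛσ_pow : ∀ b t : ℕ, Λσ ((Lσ ^ (t + 1)) ((Lσb ^ b) u))
      = (((t : ℂ) + 1) * ((m : ℂ) - t)) • (Lσ ^ t) ((Lσb ^ b) u) := by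
    intro b t
    exact auxLambdaPow (fun p'' => V p'' (q' + 2 * (b : ℤ))) Lσ Λσ n
      (fun p'' => hLσ p'' (q' + 2 * b)) (fun p'' => hΛσdeg p'' (q' + 2 * b))
      (fun j' => hinjσ j' (q' + 2 * b)) (fun p'' v hv => hrelσ p'' (q' + 2 * b) v hv)
      m ((Lσb ^ b) u) (M1 b) (F1 b) t
  have hΛσb_pow : ∀ a t : ℕ, Λσb ((Lσb ^ (t + 1)) ((Lσ ^ a) u))
      = (((t : ℂ) + 1) * ((mb : ℂ) - t)) • (Lσb ^ t) ((Lσ ^ a) u) := by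
    intro a t
    exact auxLambdaPow (fun q'' => V (p' + 2 * (a : ℤ)) q'') Lσb Λσb n
      (fun q'' => hLσb (p' + 2 * a) q'') (fun q'' => hΛσbdeg (p' + 2 * a) q'')
      (fun k' => hinjσb k' (p' + 2 * a)) (fun q'' v hv => hrelσb (p' + 2 * a) q'' v hv)
      mb ((Lσ ^ a) u) (M2 a) (F2 a) t
  rcases j with _ | s
  · rcases k with _ | t
    · have h1 : Λσb u = 0 := by simpa using hΛσb_on 0
      have h2 : Λσ u = 0 := by simpa using hΛσ_on 0
      simp [h1, h2]
    · have h1 : Λσb ((Lσb ^ (t + 1)) u) = (((t : ℂ) + 1) * ((mb : ℂ) - t)) • (Lσb ^ t) u := by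
        simpa using hΛσb_pow 0 t
      simp only [pow_zero, Module.End.one_apply]
      rw [h1, map_smul, hΛσ_on t, hΛσ_on (t + 1), map_zero, smul_zero]
  · rcases k with _ | t
    · have h1 : Λσ ((Lσ ^ (s + 1)) u) = (((s : ℂ) + 1) * ((m : ℂ) - s)) • (Lσ ^ s) u := by
        simpa using hΛσ_pow 0 s
      simp only [pow_zero, Module.End.one_apply]
      rw [h1, map_smul, hΛσb_on s, hΛσb_on (s + 1), map_zero, smul_zero]
    · have hL : Λσ (Λσb ((Lσ ^ (s + 1)) ((Lσb ^ (t + 1)) u)))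
          = (((t : ℂ) + 1) * ((mb : ℂ) - t)) • (((s : ℂ) + 1) * ((m : ℂ) - s)) •
            (Lσ ^ s) ((Lσb ^ t) u) := by
        rw [hC (s + 1) (t + 1) u, hΛσb_pow (s + 1) t, map_smul, ← hC (s + 1) t u, hΛσ_pow t s]
      have hR : Λσb (Λσ ((Lσ ^ (s + 1)) ((Lσb ^ (t + 1)) u)))
          = (((s : ℂ) + 1) * ((m : ℂ) - s)) • (((t : ℂ) + 1) * ((mb : ℂ) - t)) •
            (Lσb ^ t) ((Lσ ^ s) u) := by
        rw [hΛσ_pow (t + 1) s, map_smul, hC s (t + 1) u, hΛσb_pow s t]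
      rw [hL, hR, hC s t u, smul_comm]

/-- simultaneous primitive decomposition for two commuting
Lefschetz operators `Lσ` (bidegree (2,0)) and `Lσb` (bidegree (0,2)), each
satisfying hard Lefschetz in its grading; consequently the dual Lefschetz
operators `Λσ`, `Λσb` (characterized by the commutator relations
`[Lσ,Λσ] = (p-n)·id`, `[Lσb,Λσb] = (q-n)·id` on `V^{p,q}` together with
their bidegrees) commute. -/
theorem stmt6 {W : Type*} [AddCommGroup W] [Module ℂ W] [FiniteDimensional ℂ W]
    (V : ℤ → ℤ → Submodule ℂ W)
    (hV : DirectSum.IsInternal fun pq : ℤ × ℤ => V pq.1 pq.2)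
    (n : ℤ) (Lσ Lσb Λσ Λσb : Module.End ℂ W)
    (hLσ : ∀ p q : ℤ, ∀ v ∈ V p q, Lσ v ∈ V (p + 2) q)
    (hLσb : ∀ p q : ℤ, ∀ v ∈ V p q, Lσb v ∈ V p (q + 2))
    (hcomm : ⁅Lσ, Lσb⁆ = 0)
    (hsurjσ : ∀ j : ℕ, ∀ q : ℤ, ∀ w ∈ V (n + j) q, ∃ v ∈ V (n - j) q, (Lσ ^ j) v = w)
    (hinjσ : ∀ j : ℕ, ∀ q : ℤ, ∀ v ∈ V (n - j) q, (Lσ ^ j) v = 0 → v = 0)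
    (hsurjσb : ∀ k : ℕ, ∀ p : ℤ, ∀ w ∈ V p (n + k), ∃ v ∈ V p (n - k), (Lσb ^ k) v = w)
    (hinjσb : ∀ k : ℕ, ∀ p : ℤ, ∀ v ∈ V p (n - k), (Lσb ^ k) v = 0 → v = 0)
    (hΛσdeg : ∀ p q : ℤ, ∀ v ∈ V p q, Λσ v ∈ V (p - 2) q)
    (hΛσbdeg : ∀ p q : ℤ, ∀ v ∈ V p q, Λσb v ∈ V p (q - 2))
    (hΛσ : ∀ p q : ℤ, ∀ v ∈ V p q, ⁅Lσ, Λσ⁆ v = ((p : ℂ) - n) • v)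
    (hΛσb : ∀ p q : ℤ, ∀ v ∈ V p q, ⁅Lσb, Λσb⁆ v = ((q : ℂ) - n) • v) :
    (∀ p q : ℤ, ∀ v ∈ V p q,
      ∃ c : ℕ × ℕ →₀ W,
        (∀ jk : ℕ × ℕ, c jk ∈ V (p - 2 * jk.1) (q - 2 * jk.2)) ∧
        (∀ jk : ℕ × ℕ, (Lσ ^ (n - (p - 2 * jk.1) + 1).toNat) (c jk) = 0) ∧
        (∀ jk : ℕ × ℕ, (Lσb ^ (n - (q - 2 * jk.2) + 1).toNat) (c jk) = 0) ∧
        v = c.sum fun jk w => (Lσ ^ jk.1) ((Lσb ^ jk.2) w)) ∧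
    ⁅Λσ, Λσb⁆ = 0 := by
  -- powers of the two Lefschetz operators commute
  have hCC : Commute Lσ Lσb := by
    have h := hcomm
    rw [Ring.lie_def, sub_eq_zero] at h
    exact h
  have hC : ∀ a b : ℕ, ∀ x : W, (Lσ ^ a) ((Lσb ^ b) x) = (Lσb ^ b) ((Lσ ^ a) x) := by
    intro a b x
    have := (hCC.pow_pow a b)
    calc (Lσ ^ a) ((Lσb ^ b) x) = (Lσ ^ a * Lσb ^ b) x := rfl
      _ = (Lσb ^ b * Lσ ^ a) x := by rw [this]
      _ = (Lσb ^ b) ((Lσ ^ a) x) := rfl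
  -- only finitely many bidegrees are nonzero, giving a lower bound
  have hfin : {pq : ℤ × ℤ | V pq.1 pq.2 ≠ ⊥}.Finite :=
    WellFoundedGT.finite_ne_bot_of_iSupIndep hV.submodule_iSupIndep
  obtain ⟨B, hbot⟩ : ∃ B : ℤ, ∀ p q : ℤ, p < B ∨ q < B → V p q = ⊥ := by
    set M : ℕ := hfin.toFinset.sup (fun pq => pq.1.natAbs ⊔ pq.2.natAbs) with hM
    refine ⟨-(M : ℤ) - 1, fun p q hpq => ?_⟩
    by_contra h
    have hmem : (p, q) ∈ hfin.toFinset := hfin.mem_toFinset.mpr h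
    have hle := Finset.le_sup (f := fun pq : ℤ × ℤ => pq.1.natAbs ⊔ pq.2.natAbs) hmem
    rw [← hM] at hle
    simp only [sup_le_iff] at hle
    rcases hpq with h1 | h1 <;> omega
  -- commutator relations in rearranged form
  have hrelσ : ∀ p q : ℤ, ∀ v ∈ V p q, Lσ (Λσ v) = Λσ (Lσ v) + ((p : ℂ) - n) • v := by
    intro p q v hv
    have h := hΛσ p q v hv
    rw [Ring.lie_def, LinearMap.sub_apply, Module.End.mul_apply, Module.End.mul_apply] at h
    exact sub_eq_iff_eq_add'.mp h
  have hrelσb : ∀ p q : ℤ, ∀ v ∈ V p q, Lσb (Λσb v) = Λσb (Lσb v) + ((q : ℂ) - n) • v := by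
    intro p q v hv
    have h := hΛσb p q v hv
    rw [Ring.lie_def, LinearMap.sub_apply, Module.End.mul_apply, Module.End.mul_apply] at h
    exact sub_eq_iff_eq_add'.mp h
  have part1 := doubleDecompFull V n B Lσ Lσb hLσ hLσb hC hsurjσ hsurjσb hinjσb hbot
  refine ⟨part1, ?_⟩
  have hpt : ∀ x : W, Λσ (Λσb x) = Λσb (Λσ x) := by
    intro x
    have hx : x ∈ ⨆ pq : ℤ × ℤ, V pq.1 pq.2 := by
      rw [hV.submodule_iSup_eq_top]
      trivial
    refine Submodule.iSup_induction (motive := fun x => Λσ (Λσb x) = Λσb (Λσ x)) _ hx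
      (fun pq x hxpq => ?_) (by simp) (fun x y hx hy => by simp [map_add, hx, hy])
    obtain ⟨c, hc1, hc2, hc3, hc4⟩ := part1 pq.1 pq.2 x hxpq
    rw [hc4, map_finsuppSum, map_finsuppSum, map_finsuppSum, map_finsuppSum]
    refine Finsupp.sum_congr fun jk _ => ?_
    exact keyVanish V n Lσ Lσb Λσ Λσb hLσ hLσb hC hinjσ hinjσb hΛσdeg hΛσbdeg hrelσ hrelσb
      (pq.1 - 2 * jk.1) (pq.2 - 2 * jk.2) (c jk) (hc1 jk) (hc2 jk) (hc3 jk) jk.1 jk.2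
  ext w
  rw [Ring.lie_def]
  simp [LinearMap.sub_apply, Module.End.mul_apply, hpt w]
end

section
/- Let V be a finite-dimensional representation of sl₂(ℚ) with standard basis (e, f, h) where e acts as a degree +2 operator L on a grading V = ⊕_k V_k and h acts on V_k by (k - n). Then for each k ≥ 0, L^k : V_{n-k} → V_{n+k} is an isomorphism. -/
section Aux

variable {W : Type*} [AddCommGroup W] [Module ℚ W]

private lemma eig_step (L H : Module.End ℚ W) (hHL : H * L = L * H + (2 : ℚ) • L)
    {c : ℚ} {v : W} (hv : H v = c • v) : H (L v) = (c + 2) • L v := by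
  have h := congrArg (fun g : Module.End ℚ W => g v) hHL
  simp only [Module.End.mul_apply, LinearMap.add_apply, LinearMap.smul_apply] at h
  rw [h, hv, map_smul, ← add_smul]

private lemma eig_pow (L H : Module.End ℚ W) (hHL : H * L = L * H + (2 : ℚ) • L)
    {c : ℚ} {v : W} (hv : H v = c • v) :
    ∀ j : ℕ, H ((L ^ j) v) = (c + 2 * j) • (L ^ j) v := by
  intro j
  induction j with
  | zero => simpa using hv
  | succ j ih =>
    have h1 : (L ^ (j + 1)) v = L ((L ^ j) v) := by
      rw [pow_succ', Module.End.mul_apply]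
    rw [h1]
    have := eig_step L H hHL ih
    rw [this]
    congr 1
    push_cast
    ring

private lemma pow_succ_apply (L : Module.End ℚ W) (j : ℕ) (x : W) :
    (L ^ (j + 1)) x = L ((L ^ j) x) := by
  rw [pow_succ', Module.End.mul_apply]

private lemma key_inj [FiniteDimensional ℚ W] (L F H : Module.End ℚ W)
    (hHL : H * L = L * H + (2 : ℚ) • L)
    (hHF : H * F = F * H - (2 : ℚ) • F)
    (hLF : L * F = F * L + H) :
    ∀ k : ℕ, ∀ v : W, H v = (-(k : ℚ)) • v → (L ^ k) v = 0 → v = 0 := by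
  classical
  -- a bound on the eigenvalues of H
  obtain ⟨B, hB⟩ := (H.finite_hasEigenvalue.image abs).bddAbove
  obtain ⟨N, hNB⟩ := exists_nat_ge B
  have hbound : ∀ (c : ℚ) (v : W), v ≠ 0 → H v = c • v → |c| ≤ (N : ℚ) := by
    intro c v hv hc
    refine le_trans (hB ?_) hNB
    exact Set.mem_image_of_mem _ (Module.End.hasEigenvalue_of_hasEigenvector
      ⟨Module.End.mem_eigenspace_iff.mpr hc, hv⟩)
  -- L is nilpotent on eigenvectors
  have hnil : ∀ (c : ℚ) (v : W), H v = c • v → ∃ m : ℕ, (L ^ m) v = 0 := by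
    intro c v hc
    obtain ⟨m, hm⟩ := exists_nat_gt ((N : ℚ) - c)
    refine ⟨m, by_contra fun h0 => ?_⟩
    have h1 := hbound (c + 2 * m) ((L ^ m) v) h0 (eig_pow L H hHL hc m)
    have h2 := le_abs_self (c + 2 * m)
    have h3 : (0 : ℚ) ≤ (m : ℚ) := Nat.cast_nonneg m
    linarith
  -- the string computation for a lowest-weight vector
  have string : ∀ (c : ℚ) (v : W), H v = c • v → F v = 0 →
      ∀ j : ℕ, F ((L ^ (j + 1)) v) = (-((j : ℚ) + 1) * (c + j)) • (L ^ j) v := by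
    intro c v hc hf j
    have hFL : ∀ x : W, F (L x) = L (F x) - H x := by
      intro x
      have h := congrArg (fun g : Module.End ℚ W => g x) hLF
      simp only [Module.End.mul_apply, LinearMap.add_apply] at h
      rw [h]
      abel
    induction j with
    | zero =>
      rw [pow_one, pow_zero, Module.End.one_apply, hFL v, hf, map_zero, hc]
      push_cast
      module
    | succ j ih =>
      have h1 : (L ^ (j + 2)) v = L ((L ^ (j + 1)) v) := by
        rw [pow_succ', Module.End.mul_apply]
      rw [h1, hFL, ih, map_smul, eig_pow L H hHL hc (j + 1)]
      have h2 : (L ^ (j + 1)) v = L ((L ^ j) v) := by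
        rw [pow_succ', Module.End.mul_apply]
      rw [h2, ← sub_smul]
      congr 1
      push_cast
      ring
  -- the commutator formula  L^(m+1) ∘ F = F ∘ L^(m+1) + (m+1)(m+c) L^m  on eigenvectors
  have comm : ∀ (c : ℚ) (v : W), H v = c • v → ∀ m : ℕ,
      (L ^ (m + 1)) (F v) = F ((L ^ (m + 1)) v) + (((m : ℚ) + 1) * ((m : ℚ) + c)) • (L ^ m) v := by
    intro c v hc m
    have hLFx : ∀ x : W, L (F x) = F (L x) + H x := by
      intro x
      have h := congrArg (fun g : Module.End ℚ W => g x) hLF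
      simpa only [Module.End.mul_apply, LinearMap.add_apply] using h
    induction m with
    | zero =>
      simp only [zero_add, pow_one, pow_zero, Module.End.one_apply, Nat.cast_zero]
      rw [hLFx v, hc]
      norm_num
    | succ m ih =>
      rw [pow_succ_apply L (m + 1) (F v), ih, map_add, map_smul, hLFx ((L ^ (m + 1)) v),
        ← pow_succ_apply L (m + 1) v, ← pow_succ_apply L m v, eig_pow L H hHL hc (m + 1),
        add_assoc, ← add_smul]
      congr 1
      congr 1
      push_cast
      ring
  -- main downward induction
  have main : ∀ t : ℕ, ∀ k : ℕ, (N : ℚ) < (k : ℚ) + t →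
      ∀ v : W, H v = (-(k : ℚ)) • v → (L ^ k) v = 0 → v = 0 := by
    intro t
    induction t with
    | zero =>
      intro k hk v hv hL
      by_contra h0
      have h1 := hbound _ v h0 hv
      rw [abs_neg, abs_of_nonneg (Nat.cast_nonneg k)] at h1
      push_cast at hk
      linarith
    | succ t ih =>
      intro k hk v hv hL
      have hFv0 : F v = 0 := by
        have hc1 : (L ^ (k + 1)) (F v) = 0 := by
          rw [comm _ v hv k, pow_succ_apply L k v, hL]
          simp
        have hc2 : (L ^ (k + 2)) (F v) = 0 := by
          rw [pow_succ_apply L (k + 1) (F v), hc1, map_zero]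
        have hHFv : H (F v) = (-((k : ℚ) + 2)) • F v := by
          have h := congrArg (fun g : Module.End ℚ W => g v) hHF
          simp only [Module.End.mul_apply, LinearMap.sub_apply, LinearMap.smul_apply] at h
          rw [h, hv, map_smul, ← sub_smul]
          module
        refine ih (k + 2) ?_ (F v) ?_ hc2
        · push_cast at hk ⊢
          linarith
        · rw [hHFv]
          congr 1
          push_cast
          ring
      by_contra h0
      have hex : ∃ m, (L ^ m) v = 0 := hnil _ v hv
      have hfind0 : Nat.find hex ≠ 0 := by
        intro h
        have := Nat.find_spec hex
        rw [h, pow_zero, Module.End.one_apply] at this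
        exact h0 this
      obtain ⟨m, hm⟩ := Nat.exists_eq_succ_of_ne_zero hfind0
      have hLm1 : (L ^ (m + 1)) v = 0 := by
        have h := Nat.find_spec hex
        rw [hm] at h
        exact h
      have hLm : (L ^ m) v ≠ 0 := Nat.find_min hex (by omega)
      have hs := string _ v hv hFv0 m
      rw [hLm1, map_zero] at hs
      have hcoeff : (-((m : ℚ) + 1) * ((-(k : ℚ)) + m)) = 0 := by
        by_contra hcne
        rcases smul_eq_zero.mp hs.symm with h | h
        · exact hcne h
        · exact hLm h
      have hmk : m = k := by
        rcases mul_eq_zero.mp hcoeff with h | h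
        · exfalso
          have : (0 : ℚ) ≤ (m : ℚ) := Nat.cast_nonneg m
          linarith
        · have : (m : ℚ) = (k : ℚ) := by linarith
          exact_mod_cast this
      have hle : Nat.find hex ≤ k := Nat.find_le hL
      omega
  intro k v hv hL
  refine main (N + 1) k ?_ v hv hL
  have h3 : (0 : ℚ) ≤ (k : ℚ) := Nat.cast_nonneg k
  push_cast
  linarith

end Aux

/-- hard Lefschetz from sl₂-representation theory.  Let `W` be a
finite-dimensional representation of `sl₂(ℚ)`, with `e` acting as a degree `+2`
operator `L` on the grading `W = ⊕ₖ V k` and `h` acting on `V k` by `k - n`.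
Then `L^k : V (n-k) → V (n+k)` is an isomorphism for every `k ≥ 0`. -/
theorem stmt16 {W : Type*} [AddCommGroup W] [Module ℚ W] [FiniteDimensional ℚ W]
    (V : ℤ → Submodule ℚ W) (hV : DirectSum.IsInternal V) (n : ℤ)
    (L F H : Module.End ℚ W)
    (hrel₁ : ⁅H, L⁆ = (2 : ℚ) • L)
    (hrel₂ : ⁅H, F⁆ = (-2 : ℚ) • F)
    (hrel₃ : ⁅L, F⁆ = H)
    (hLdeg : ∀ k : ℤ, ∀ v ∈ V k, L v ∈ V (k + 2))
    (hH : ∀ k : ℤ, ∀ v ∈ V k, H v = ((k : ℚ) - n) • v) :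
    ∀ k : ℕ,
      (∀ w ∈ V (n + k), ∃ v ∈ V (n - k), (L ^ k) v = w) ∧
      (∀ v ∈ V (n - k), (L ^ k) v = 0 → v = 0) := by
  classical
  rw [LieRing.of_associative_ring_bracket] at hrel₁ hrel₂ hrel₃
  have hHL : H * L = L * H + (2 : ℚ) • L := by
    rw [sub_eq_iff_eq_add] at hrel₁
    rw [hrel₁, add_comm]
  have hHF : H * F = F * H - (2 : ℚ) • F := by
    rw [sub_eq_iff_eq_add] at hrel₂
    rw [hrel₂]
    module
  have hLF : L * F = F * L + H := by
    rw [sub_eq_iff_eq_add] at hrel₃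
    rw [hrel₃, add_comm]
  -- the swapped hypotheses, for F as raising operator with respect to -H
  have hHL' : (-H) * F = F * (-H) + (2 : ℚ) • F := by
    rw [neg_mul, hHF, mul_neg]
    module
  have hHF' : (-H) * L = L * (-H) - (2 : ℚ) • L := by
    rw [neg_mul, hHL, mul_neg]
    module
  have hLF' : F * L = L * F + (-H) := by
    rw [hLF]
    module
  -- identification of V with eigenspaces of H
  have hVle : ∀ j : ℤ, V (n + j) ≤ Module.End.eigenspace H ((j : ℚ)) := by
    intro j v hv
    rw [Module.End.mem_eigenspace_iff, hH (n + j) v hv]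
    congr 1
    push_cast
    ring
  have htop : (⨆ j : ℤ, V (n + j)) = ⊤ := by
    rw [eq_top_iff, ← hV.submodule_iSup_eq_top]
    refine iSup_le fun k => ?_
    have h1 : V k ≤ V (n + (k - n)) := by rw [add_sub_cancel]
    exact h1.trans (le_iSup (fun j => V (n + j)) (k - n))
  have hVE : ∀ j : ℤ, V (n + j) = Module.End.eigenspace H ((j : ℚ)) := by
    intro j₀
    refine le_antisymm (hVle j₀) ?_
    have hInd : iSupIndep (fun j : ℤ => Module.End.eigenspace H ((j : ℚ))) := by
      have hinj : Function.Injective (fun j : ℤ => (j : ℚ)) := fun a b h =>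
        Int.cast_injective h
      exact H.eigenspaces_iSupIndep.comp hinj
    set a := V (n + j₀) with ha
    set b := ⨆ (j : ℤ) (_ : j ≠ j₀), V (n + j) with hb
    have hab : (⊤ : Submodule ℚ W) ≤ a ⊔ b := by
      rw [← htop]
      refine iSup_le fun j => ?_
      by_cases h : j = j₀
      · subst h; exact le_sup_left
      · exact le_trans (le_iSup₂ (f := fun (j : ℤ) (_ : j ≠ j₀) => V (n + j)) j h) le_sup_right
    have hbE : b ≤ ⨆ (j : ℤ) (_ : j ≠ j₀), Module.End.eigenspace H ((j : ℚ)) :=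
      iSup₂_mono fun j _ => hVle j
    have hdisj : Disjoint (Module.End.eigenspace H ((j₀ : ℚ))) b :=
      (hInd j₀).mono_right hbE
    have hEa : Module.End.eigenspace H ((j₀ : ℚ)) = a := by
      calc Module.End.eigenspace H ((j₀ : ℚ))
          = (a ⊔ b) ⊓ Module.End.eigenspace H ((j₀ : ℚ)) := by
            rw [top_le_iff.mp hab, top_inf_eq]
        _ = a ⊔ (b ⊓ Module.End.eigenspace H ((j₀ : ℚ))) := sup_inf_assoc_of_le b (hVle j₀)
        _ = a ⊔ ⊥ := by rw [disjoint_iff.mp hdisj.symm]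
        _ = a := sup_bot_eq a
    exact hEa.le
  intro k
  have hk1 : V (n + (k : ℤ)) = Module.End.eigenspace H ((k : ℚ)) := by
    have h := hVE (k : ℤ)
    rwa [Int.cast_natCast] at h
  have hk2 : V (n - (k : ℤ)) = Module.End.eigenspace H (-(k : ℚ)) := by
    have h := hVE (-(k : ℤ))
    rw [Int.cast_neg, Int.cast_natCast, ← sub_eq_add_neg] at h
    exact h
  -- the restricted maps
  have hmapL : ∀ v ∈ Module.End.eigenspace H (-(k : ℚ)),
      (L ^ k) v ∈ Module.End.eigenspace H ((k : ℚ)) := by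
    intro v hv
    rw [Module.End.mem_eigenspace_iff] at hv ⊢
    rw [eig_pow L H hHL hv k]
    congr 1
    ring
  have hmapF : ∀ v ∈ Module.End.eigenspace H ((k : ℚ)),
      (F ^ k) v ∈ Module.End.eigenspace H (-(k : ℚ)) := by
    intro v hv
    rw [Module.End.mem_eigenspace_iff] at hv ⊢
    have hv' : (-H) v = (-(k : ℚ)) • v := by
      simp only [LinearMap.neg_apply, hv]
      module
    have h := eig_pow F (-H) hHL' hv' k
    simp only [LinearMap.neg_apply] at h
    have h2 : H ((F ^ k) v) = -((-(k : ℚ) + 2 * k) • (F ^ k) v) := by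
      rw [← h]
      exact (neg_neg _).symm
    rw [h2, ← neg_smul]
    congr 1
    ring
  let E1 := Module.End.eigenspace H (-(k : ℚ))
  let E2 := Module.End.eigenspace H ((k : ℚ))
  let φ : E1 →ₗ[ℚ] E2 := (L ^ k).restrict hmapL
  let ψ : E2 →ₗ[ℚ] E1 := (F ^ k).restrict hmapF
  have hφinj : Function.Injective φ := by
    rw [← LinearMap.ker_eq_bot, LinearMap.ker_eq_bot']
    intro x hx
    have h1 : (L ^ k) (x : W) = 0 := by
      have h := congrArg Subtype.val hx
      rwa [LinearMap.restrict_apply] at h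
    have h2 : H (x : W) = (-(k : ℚ)) • (x : W) := Module.End.mem_eigenspace_iff.mp x.2
    exact Subtype.ext (key_inj L F H hHL hHF hLF k x h2 h1)
  have hψinj : Function.Injective ψ := by
    rw [← LinearMap.ker_eq_bot, LinearMap.ker_eq_bot']
    intro x hx
    have h1 : (F ^ k) (x : W) = 0 := by
      have h := congrArg Subtype.val hx
      rwa [LinearMap.restrict_apply] at h
    have h2 : (-H) (x : W) = (-(k : ℚ)) • (x : W) := by
      have := Module.End.mem_eigenspace_iff.mp x.2
      simp only [LinearMap.neg_apply, this]
      module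
    exact Subtype.ext (key_inj F L (-H) hHL' hHF' hLF' k x h2 h1)
  have hfr : Module.finrank ℚ E1 = Module.finrank ℚ E2 :=
    le_antisymm (LinearMap.finrank_le_finrank_of_injective hφinj)
      (LinearMap.finrank_le_finrank_of_injective hψinj)
  have hφsurj : Function.Surjective φ :=
    (LinearMap.injective_iff_surjective_of_finrank_eq_finrank hfr).mp hφinj
  constructor
  · intro w hw
    rw [hk1] at hw
    obtain ⟨x, hx⟩ := hφsurj ⟨w, hw⟩
    refine ⟨x, ?_, ?_⟩
    · rw [hk2]; exact x.2
    · have h := congrArg Subtype.val hx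
      rwa [LinearMap.restrict_apply] at h
  · intro v hv hL0
    rw [hk2, Module.End.mem_eigenspace_iff] at hv
    exact key_inj L F H hHL hHF hLF k v hv hL0
end

section
/- Let g be a Lie algebra of endomorphisms of a graded-commutative ring A such that every element of g acts by derivations and preserves the grading-degree-0 pairing ⟨x, y⟩ = (xy)_{top} given by the top-degree component of the product. Suppose A is generated in degree 2 with A_2 = H, and that for all D ∈ g and all α ∈ H, the Fujiki-type relation ⟨α^n, α^n⟩ = c·Q(α,α)^n holds for a nondegenerate quadratic form Q on H and constant c ≠ 0. Then every D ∈ g preserving ⟨-,-⟩ and acting by derivations satisfies Q(Dα, α) = 0 for all α ∈ H, i.e. g restricted to H lies in so(H, Q). -/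
/-!
Differentiating the Fujiki relation `c Q(α)^n = tr (α^(2n))` at `α` in the direction `Dα` gives
`2 c n Q(α)^(n-1) Q(α, Dα) = 2n tr (α^(2n-1) Dα) = tr (D (α^(2n))) = 0`, so `Q(Dα, α) = 0` wherever
`Q(α) ≠ 0`. These `α` are Zariski-dense in `H` unless `Q` vanishes identically on `H`, and in that
case polarization gives the claim directly.
-/

open Polynomial Finset
open LinearMap (BilinForm)

namespace LinearMap.BilinForm

section LinePoly

variable {K M : Type*} [CommRing K] [AddCommGroup M] [Module K M]

noncomputable def linePoly (Q : BilinForm K M) (α β : M) : K[X] :=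
  C (Q α α) + C (Q α β + Q β α) * X + C (Q β β) * X ^ 2

variable (Q : BilinForm K M) (α β : M)

theorem eval_linePoly (t : K) : (Q.linePoly α β).eval t = Q (α + t • β) (α + t • β) := by
  simp only [linePoly, eval_add, eval_mul, eval_C, eval_X, eval_pow, map_add, map_smul,
    LinearMap.add_apply, LinearMap.smul_apply, smul_eq_mul]
  ring

@[simp] theorem linePoly_coeff_zero : (Q.linePoly α β).coeff 0 = Q α α := by
  simp [linePoly]

@[simp] theorem linePoly_coeff_one : (Q.linePoly α β).coeff 1 = Q α β + Q β α := by
  simp [linePoly]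

@[simp] theorem linePoly_coeff_two : (Q.linePoly α β).coeff 2 = Q β β := by
  simp [linePoly]

end LinePoly

variable {K M : Type*} [Field K] [AddCommGroup M] [Module K M]

theorem apply_add_apply_swap_eq_zero_of_forall_isotropic {Q : BilinForm K M} {H : Submodule K M}
    (hQ : ∀ α ∈ H, Q α α = 0) {x y : M} (hx : x ∈ H) (hy : y ∈ H) : Q x y + Q y x = 0 := by
  have hxy := hQ (x + y) (H.add_mem hx hy)
  simp only [map_add, LinearMap.add_apply, hQ x hx, hQ y hy] at hxy
  linear_combination hxy

/-- On a line through an anisotropic vector, `Q` restricts to a nonzero polynomial. -/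
theorem apply_self_eq_zero_of_forall_anisotropic [Infinite K] {Q B : BilinForm K M}
    {H : Submodule K M} {β : M} (hβ : β ∈ H) (hββ : Q β β ≠ 0)
    (hB : ∀ α ∈ H, Q α α ≠ 0 → B α α = 0) {α : M} (hα : α ∈ H) : B α α = 0 := by
  have hprod : B.linePoly α β * Q.linePoly α β = 0 := by
    refine Polynomial.funext fun t => ?_
    rw [eval_mul, eval_zero, eval_linePoly, eval_linePoly]
    by_cases ht : Q (α + t • β) (α + t • β) = 0
    · rw [ht, mul_zero]
    · rw [hB _ (H.add_mem hα (H.smul_mem t hβ)) ht, zero_mul]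
  have hQ : Q.linePoly α β ≠ 0 := fun h => hββ (by rw [← linePoly_coeff_two Q α β, h, coeff_zero])
  simpa using congr_arg (coeff · 0) ((mul_eq_zero.mp hprod).resolve_right hQ)

end LinearMap.BilinForm

theorem Polynomial.coeff_one_pow {R : Type*} [CommSemiring R] (p : R[X]) (n : ℕ) :
    (p ^ n).coeff 1 = n * p.coeff 1 * p.coeff 0 ^ (n - 1) := by
  have h := PowerSeries.coeff_one_pow n (p : PowerSeries R)
  rwa [← coe_pow, coeff_coe, coeff_coe, constantCoeff_coe] at h

section

variable {K A : Type*} [CommSemiring K] [CommSemiring A] [Algebra K A]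

theorem exists_eval_eq_apply_add_smul_pow (f : A →ₗ[K] K) (α β : A) (m : ℕ) :
    ∃ p : K[X], (∀ t : K, p.eval t = f ((α + t • β) ^ m)) ∧
      p.coeff 1 = m * f (α ^ (m - 1) * β) := by
  refine ⟨∑ k ∈ range (m + 1), C (m.choose k * f (α ^ (m - k) * β ^ k)) * X ^ k, fun t => ?_, ?_⟩
  · rw [eval_finsetSum, add_comm α, add_pow, map_sum]
    refine sum_congr rfl fun k _ => ?_
    have h : (t • β) ^ k * α ^ (m - k) * (m.choose k : A) =
        ((m.choose k : K) * t ^ k) • (α ^ (m - k) * β ^ k) := by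
      simp only [Algebra.smul_def, map_mul, map_pow, map_natCast]
      ring
    rw [h, map_smul, smul_eq_mul, eval_mul, eval_C, eval_X_pow]
    ring
  · simp only [finsetSum_coeff, coeff_C_mul_X_pow, sum_ite_eq, mem_range]
    split_ifs with hm
    · simp
    · simp [show m = 0 by omega]

end

section Fujiki

variable {K A : Type*} [Field K] [CommRing A] [Algebra K A]
  {H : Submodule K A} {tr : A →ₗ[K] K} {Q : BilinForm K A} {c : K} {n : ℕ}

/-- The coefficient of `t` in the Fujiki relation `c * Q(α + t β)^n = tr ((α + t β)^(2n))`. -/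
theorem fujiki_linearization [Infinite K]
    (hFujiki : ∀ α ∈ H, c * Q α α ^ n = tr (α ^ (2 * n))) {α β : A} (hα : α ∈ H) (hβ : β ∈ H) :
    c * (n * (Q α β + Q β α) * Q α α ^ (n - 1)) = (2 * n : ℕ) * tr (α ^ (2 * n - 1) * β) := by
  obtain ⟨p, hp, hp1⟩ := exists_eval_eq_apply_add_smul_pow tr α β (2 * n)
  have hpQ : p = C c * Q.linePoly α β ^ n := Polynomial.funext fun t => by
    rw [hp, eval_mul, eval_C, eval_pow, BilinForm.eval_linePoly,
      hFujiki _ (H.add_mem hα (H.smul_mem t hβ))]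
  rw [← hp1, hpQ, coeff_C_mul, coeff_one_pow, BilinForm.linePoly_coeff_one,
    BilinForm.linePoly_coeff_zero]

variable [CharZero K] {D : Derivation K A A}

theorem derivation_skew_of_fujiki_of_anisotropic (hc : c ≠ 0) (hn : n ≠ 0)
    (hFujiki : ∀ α ∈ H, c * Q α α ^ n = tr (α ^ (2 * n))) (hDH : ∀ a ∈ H, D a ∈ H)
    (hDtr : ∀ a, tr (D a) = 0) {α : A} (hα : α ∈ H) (hαα : Q α α ≠ 0) :
    Q α (D α) + Q (D α) α = 0 := by
  have h := fujiki_linearization hFujiki hα (hDH α hα)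
  have hD : ((2 * n : ℕ) : K) * tr (α ^ (2 * n - 1) * D α) = tr (D (α ^ (2 * n))) := by
    rw [Derivation.leibniz_pow, smul_eq_mul, map_nsmul, nsmul_eq_mul]
  rw [hD, hDtr] at h
  simpa [hc, hn, hαα] using h

theorem derivation_skew_of_fujiki (hc : c ≠ 0) (hn : n ≠ 0)
    (hFujiki : ∀ α ∈ H, c * Q α α ^ n = tr (α ^ (2 * n))) (hDH : ∀ a ∈ H, D a ∈ H)
    (hDtr : ∀ a, tr (D a) = 0) {α : A} (hα : α ∈ H) :
    Q α (D α) + Q (D α) α = 0 := by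
  by_cases hQ : ∃ β ∈ H, Q β β ≠ 0
  · obtain ⟨β, hβ, hββ⟩ := hQ
    exact BilinForm.apply_self_eq_zero_of_forall_anisotropic (B := Q.compRight D + Q.compLeft D)
      hβ hββ (fun α hα hαα =>
        derivation_skew_of_fujiki_of_anisotropic hc hn hFujiki hDH hDtr hα hαα) hα
  · push Not at hQ
    exact BilinForm.apply_add_apply_swap_eq_zero_of_forall_isotropic hQ hα (hDH α hα)

end Fujiki

theorem stmt18_general {A : Type*} [CommRing A] [Algebra ℚ A]
    (𝒜 : ℕ → Submodule ℚ A)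
    (n : ℕ) (hn : 1 ≤ n)
    (tr : A →ₗ[ℚ] ℚ)
    (Q : LinearMap.BilinForm ℚ A) (hQsymm : ∀ a b, Q a b = Q b a)
    (c : ℚ) (hc : c ≠ 0)
    (hFujiki : ∀ α ∈ 𝒜 2, c * (Q α α) ^ n = tr (α ^ (2 * n)))
    (D : Derivation ℚ A A)
    (hDdeg : ∀ k : ℕ, ∀ a ∈ 𝒜 k, D a ∈ 𝒜 k)
    (hDtr : ∀ a : A, tr (D a) = 0) :
    ∀ α ∈ 𝒜 2, Q (D α) α = 0 := by
  intro α hα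
  have hskew := derivation_skew_of_fujiki hc (by omega) hFujiki (hDdeg 2) hDtr hα
  rw [hQsymm α] at hskew
  linear_combination hskew / 2

/-- a degree-0 derivation preserving the top-degree pairing of a
graded commutative algebra satisfying a Fujiki-type relation is
infinitesimally orthogonal on `H = A₂`.  `A` is a finite-dimensional graded
commutative `ℚ`-algebra with grading `𝒜`, top degree `4n` with one-dimensional
top piece identified with `ℚ` via the trace `tr`, generated in degree 2; `Q`
is a symmetric bilinear form, nondegenerate on `A₂`, satisfying
`c·Q(α,α)^n = tr(α^{2n})` for all `α ∈ A₂` with `c ≠ 0`; `D` is a degree-0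
derivation annihilating the trace.  Then `Q(Dα, α) = 0` for all `α ∈ A₂`,
i.e. `D` restricted to `H` lies in `so(H, Q)`. -/
theorem stmt18 {A : Type*} [CommRing A] [Algebra ℚ A] [Module.Finite ℚ A]
    (𝒜 : ℕ → Submodule ℚ A) (hgraded : DirectSum.IsInternal 𝒜)
    (hmul : ∀ k l : ℕ, ∀ a ∈ 𝒜 k, ∀ b ∈ 𝒜 l, a * b ∈ 𝒜 (k + l))
    (n : ℕ) (hn : 1 ≤ n)
    (htop : Module.finrank ℚ (𝒜 (4 * n)) = 1)
    (hbound : ∀ k : ℕ, 4 * n < k → 𝒜 k = ⊥)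
    (hgen : Algebra.adjoin ℚ ((𝒜 2 : Submodule ℚ A) : Set A) = ⊤)
    (tr : A →ₗ[ℚ] ℚ)
    (htr : ∀ k : ℕ, k ≠ 4 * n → ∀ a ∈ 𝒜 k, tr a = 0)
    (htrtop : ∀ a ∈ 𝒜 (4 * n), tr a = 0 → a = 0)
    (Q : LinearMap.BilinForm ℚ A) (hQsymm : ∀ a b, Q a b = Q b a)
    (hQnd : ∀ α ∈ 𝒜 2, (∀ β ∈ 𝒜 2, Q α β = 0) → α = 0)
    (c : ℚ) (hc : c ≠ 0)
    (hFujiki : ∀ α ∈ 𝒜 2, c * (Q α α) ^ n = tr (α ^ (2 * n)))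
    (D : Derivation ℚ A A)
    (hDdeg : ∀ k : ℕ, ∀ a ∈ 𝒜 k, D a ∈ 𝒜 k)
    (hDtr : ∀ a : A, tr (D a) = 0) :
    ∀ α ∈ 𝒜 2, Q (D α) α = 0 :=
  stmt18_general 𝒜 n hn tr Q hQsymm c hc hFujiki D hDdeg hDtr
end
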